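/- arXiv:1207.1965 — 2 statements merged into one kernel-verified Lean document; each statement's English description precedes it below -/
import Mathlib

section
/- Regret bound for the exponentially weighted average rule with specialized experts: under convex losses with |ℓ_t(δ_i) - ℓ_t(δ_j)| ≤ L for all i, j ∈ E_t and all t, the rule E_η satisfies max_j R_T(E_η, j) ≤ (ln N)/η + (η/2) L² T, where R_T(E_η, j) = Σ_t (ℓ_t(p_t) - ℓ_t(δ_j)) 𝟙{j ∈ E_t}. -/
open Finset

/-- The Dirac mass on expert `j`, viewed as a convex weight vector. -/
noncomputable def dirac {N : ℕ} (j : Fin N) : Fin N → ℝ := fun i => if i = j then 1 else 0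

lemma dirac_mem_stdSimplex {N : ℕ} (j : Fin N) : dirac j ∈ stdSimplex ℝ (Fin N) := by
  constructor
  · intro i
    unfold dirac
    split <;> norm_num
  · simp [dirac]

/-- A finite Hoeffding-type bound via `cosh`. -/
lemma hoeffding_finset {ι : Type*} (s : Finset ι) (q Y : ι → ℝ) (η L : ℝ)
    (hq0 : ∀ j ∈ s, 0 ≤ q j) (hq1 : ∑ j ∈ s, q j = 1)
    (hY : ∀ j ∈ s, |Y j| ≤ L) (hmean : ∑ j ∈ s, q j * Y j = 0) :
    ∑ j ∈ s, q j * Real.exp (η * Y j) ≤ Real.exp (η ^ 2 * L ^ 2 / 2) := by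
  have hs : s.Nonempty := by
    by_contra h
    rw [Finset.not_nonempty_iff_eq_empty] at h
    simp [h] at hq1
  obtain ⟨j0, hj0⟩ := hs
  have hL0 : 0 ≤ L := le_trans (abs_nonneg _) (hY j0 hj0)
  rcases eq_or_lt_of_le hL0 with hL | hL
  · -- L = 0, all Y = 0
    have hYz : ∀ j ∈ s, Y j = 0 := fun j hj =>
      abs_eq_zero.mp (le_antisymm (hL ▸ hY j hj) (abs_nonneg _))
    have : ∑ j ∈ s, q j * Real.exp (η * Y j) = 1 := by
      rw [← hq1]; exact Finset.sum_congr rfl fun j hj => by rw [hYz j hj]; simp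
    rw [this, ← hL]
    simp [Real.one_le_exp_iff]
  · -- L > 0
    have key : ∀ j ∈ s, Real.exp (η * Y j) ≤
        (L - Y j) / (2 * L) * Real.exp (-(η * L)) + (L + Y j) / (2 * L) * Real.exp (η * L) := by
      intro j hj
      have hY' := abs_le.mp (hY j hj)
      have ha : (0:ℝ) ≤ (L - Y j) / (2 * L) := by
        apply div_nonneg (by linarith [hY'.2]) (by linarith)
      have hb : (0:ℝ) ≤ (L + Y j) / (2 * L) := by
        apply div_nonneg (by linarith [hY'.1]) (by linarith)
      have hab : (L - Y j) / (2 * L) + (L + Y j) / (2 * L) = 1 := by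
        field_simp; ring
      have := convexOn_exp.2 (Set.mem_univ (-(η * L))) (Set.mem_univ (η * L)) ha hb hab
      simp only [smul_eq_mul] at this
      have harg : (L - Y j) / (2 * L) * -(η * L) + (L + Y j) / (2 * L) * (η * L) = η * Y j := by
        field_simp; ring
      rwa [harg] at this
    calc ∑ j ∈ s, q j * Real.exp (η * Y j)
        ≤ ∑ j ∈ s, q j * ((L - Y j) / (2 * L) * Real.exp (-(η * L)) +
            (L + Y j) / (2 * L) * Real.exp (η * L)) := by
          apply Finset.sum_le_sum
          intro j hj
          exact mul_le_mul_of_nonneg_left (key j hj) (hq0 j hj)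
      _ = (∑ j ∈ s, q j * ((L - Y j) / (2 * L))) * Real.exp (-(η * L)) +
            (∑ j ∈ s, q j * ((L + Y j) / (2 * L))) * Real.exp (η * L) := by
          rw [Finset.sum_mul, Finset.sum_mul, ← Finset.sum_add_distrib]
          exact Finset.sum_congr rfl fun j hj => by ring
      _ = Real.cosh (η * L) := by
          have h1 : ∑ j ∈ s, q j * ((L - Y j) / (2 * L)) = 1 / 2 := by
            have : ∑ j ∈ s, q j * ((L - Y j) / (2 * L)) =
                ((∑ j ∈ s, q j) * L - ∑ j ∈ s, q j * Y j) / (2 * L) := by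
              rw [Finset.sum_mul, ← Finset.sum_sub_distrib, Finset.sum_div]
              exact Finset.sum_congr rfl fun j hj => by ring
            rw [this, hq1, hmean]; field_simp; ring
          have h2 : ∑ j ∈ s, q j * ((L + Y j) / (2 * L)) = 1 / 2 := by
            have : ∑ j ∈ s, q j * ((L + Y j) / (2 * L)) =
                ((∑ j ∈ s, q j) * L + ∑ j ∈ s, q j * Y j) / (2 * L) := by
              rw [Finset.sum_mul, ← Finset.sum_add_distrib, Finset.sum_div]
              exact Finset.sum_congr rfl fun j hj => by ring
            rw [this, hq1, hmean]; field_simp; ring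
          rw [h1, h2, Real.cosh_eq]; ring
      _ ≤ Real.exp (η ^ 2 * L ^ 2 / 2) := by
          have := Real.cosh_le_exp_half_sq (η * L)
          rwa [mul_pow] at this



/-- Regret bound for the exponentially weighted average rule `E_η` with specialized experts:
under convex losses with `|ℓ_t(δ_i) - ℓ_t(δ_j)| ≤ L` for active `i, j`, every expert `j`
satisfies `R_T(E_η, j) ≤ (ln N)/η + (η/2) L² T`. -/
theorem ewa_specialized_regret_bound
    (N T : ℕ) (hN : 0 < N) (η L : ℝ) (hη : 0 < η) (hL : 0 ≤ L)
    (E : ℕ → Finset (Fin N)) (hE : ∀ t, (E t).Nonempty)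
    (ℓ : ℕ → (Fin N → ℝ) → ℝ)
    (hconv : ∀ t, ConvexOn ℝ (stdSimplex ℝ (Fin N)) (ℓ t))
    (hbound : ∀ t ∈ Finset.Icc 1 T, ∀ i ∈ E t, ∀ j ∈ E t,
      |ℓ t (dirac i) - ℓ t (dirac j)| ≤ L)
    (p : ℕ → Fin N → ℝ) (R : ℕ → Fin N → ℝ)
    (hR : ∀ t j, R t j =
      ∑ s ∈ Finset.Icc 1 t, (if j ∈ E s then ℓ s (p s) - ℓ s (dirac j) else 0))
    (hp1 : ∀ j, p 1 j = (if j ∈ E 1 then (1 : ℝ) else 0) / (E 1).card)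
    (hpt : ∀ t, 2 ≤ t → ∀ j, p t j =
      (if j ∈ E t then Real.exp (η * R (t - 1) j) else 0) /
        ∑ k ∈ E t, Real.exp (η * R (t - 1) k)) :
    ∀ j : Fin N, R T j ≤ Real.log N / η + η / 2 * L ^ 2 * T := by
  set c2 : ℝ := η ^ 2 * L ^ 2 / 2 with hc2
  have hc2nn : 0 ≤ c2 := by positivity
  have hR0 : ∀ k, R 0 k = 0 := by intro k; rw [hR]; simp
  have hRrec : ∀ n k, R (n + 1) k = R n k +
      (if k ∈ E (n + 1) then ℓ (n + 1) (p (n + 1)) - ℓ (n + 1) (dirac k) else 0) := by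
    intro n k
    rw [hR, hR, Finset.sum_Icc_succ_top (Nat.one_le_iff_ne_zero.mpr (Nat.succ_ne_zero n))]
  have hp : ∀ n k, p (n + 1) k =
      (if k ∈ E (n + 1) then Real.exp (η * R n k) else 0) /
        ∑ m ∈ E (n + 1), Real.exp (η * R n m) := by
    intro n k
    rcases Nat.eq_zero_or_pos n with hn | hn
    · subst hn
      rw [hp1]
      simp [hR0]
    · have := hpt (n + 1) (by omega) k
      simpa using this
  set W : ℕ → ℝ := fun t => ∑ k : Fin N, Real.exp (η * R t k) with hW
  have key : ∀ t, t ≤ T → W t ≤ N * Real.exp (c2 * t) := by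
    intro t
    induction t with
    | zero => intro _; simp [hW, hR0]
    | succ n ih =>
      intro hsT
      have ihn := ih (by omega)
      have h1n : (1:ℕ) ≤ n + 1 := by omega
      set c : ℝ := ℓ (n + 1) (p (n + 1)) with hc
      set X : Fin N → ℝ := fun k => ℓ (n + 1) (dirac k) with hX
      set S : ℝ := ∑ m ∈ E (n + 1), Real.exp (η * R n m) with hS
      have hSpos : 0 < S := Finset.sum_pos (fun m _ => Real.exp_pos _) (hE (n + 1))
      set q : Fin N → ℝ := fun k => Real.exp (η * R n k) / S with hq
      have hq0 : ∀ k ∈ E (n + 1), 0 ≤ q k := fun k _ => by positivity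
      have hq1 : ∑ k ∈ E (n + 1), q k = 1 := by
        rw [hq, ← Finset.sum_div]
        exact div_self (ne_of_gt hSpos)
      -- p (n+1) as a convex combination of diracs
      have hpt_comb : p (n + 1) = ∑ k ∈ E (n + 1), q k • dirac k := by
        funext i
        rw [hp n i, Finset.sum_apply]
        calc (if i ∈ E (n + 1) then Real.exp (η * R n i) else 0) /
              ∑ m ∈ E (n + 1), Real.exp (η * R n m)
            = if i ∈ E (n + 1) then q i else 0 := by
              split <;> simp [hq, hS]
          _ = ∑ k ∈ E (n + 1), if k = i then q k else 0 :=
              (Finset.sum_ite_eq' (E (n + 1)) i q).symm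
          _ = ∑ k ∈ E (n + 1), (q k • dirac k) i := by
              apply Finset.sum_congr rfl
              intro k _
              simp only [Pi.smul_apply, smul_eq_mul, dirac]
              rcases eq_or_ne k i with h | h <;> simp [h, eq_comm, Ne.symm]
      have hjensen : c ≤ ∑ k ∈ E (n + 1), q k * X k := by
        rw [hc, hpt_comb]
        exact (hconv (n + 1)).map_sum_le hq0 hq1 (fun k _ => dirac_mem_stdSimplex k)
      set μ : ℝ := ∑ k ∈ E (n + 1), q k * X k with hμ
      have habs : ∀ k ∈ E (n + 1), |μ - X k| ≤ L := by
        intro k hk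
        have hsum : ∑ m ∈ E (n + 1), q m * (X m - X k) = μ - X k := by
          rw [Finset.sum_congr rfl (fun m _ => (by ring :
              q m * (X m - X k) = q m * X m - q m * X k)),
            Finset.sum_sub_distrib, ← Finset.sum_mul, hq1, one_mul, ← hμ]
        rw [← hsum]
        calc |∑ m ∈ E (n + 1), q m * (X m - X k)|
            ≤ ∑ m ∈ E (n + 1), |q m * (X m - X k)| := Finset.abs_sum_le_sum_abs _ _
          _ ≤ ∑ m ∈ E (n + 1), q m * L := by
              apply Finset.sum_le_sum
              intro m hm
              rw [abs_mul, abs_of_nonneg (hq0 m hm)]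
              exact mul_le_mul_of_nonneg_left
                (hbound (n + 1) (Finset.mem_Icc.mpr ⟨h1n, hsT⟩) m hm k hk) (hq0 m hm)
          _ = L := by rw [← Finset.sum_mul, hq1, one_mul]
      have hmean : ∑ k ∈ E (n + 1), q k * (μ - X k) = 0 := by
        rw [Finset.sum_congr rfl (fun k _ => (by ring :
            q k * (μ - X k) = q k * μ - q k * X k)),
          Finset.sum_sub_distrib, ← Finset.sum_mul, hq1, one_mul, ← hμ, sub_self]
      have hhoeff : ∑ k ∈ E (n + 1), q k * Real.exp (η * (μ - X k)) ≤ Real.exp c2 :=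
        hoeffding_finset (E (n + 1)) q (fun k => μ - X k) η L hq0 hq1 habs hmean
      have hactive : ∑ k ∈ E (n + 1), Real.exp (η * R n k) * Real.exp (η * (c - X k)) ≤
          S * Real.exp c2 := by
        have step1 : ∀ k ∈ E (n + 1),
            Real.exp (η * R n k) * Real.exp (η * (c - X k)) =
            S * (q k * Real.exp (η * (c - X k))) := by
          intro k _
          rw [hq]
          field_simp
        rw [Finset.sum_congr rfl step1, ← Finset.mul_sum]
        apply mul_le_mul_of_nonneg_left _ hSpos.le
        calc ∑ k ∈ E (n + 1), q k * Real.exp (η * (c - X k))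
            ≤ ∑ k ∈ E (n + 1), q k * Real.exp (η * (μ - X k)) := by
              apply Finset.sum_le_sum
              intro k hk
              apply mul_le_mul_of_nonneg_left _ (hq0 k hk)
              apply Real.exp_le_exp.mpr
              apply mul_le_mul_of_nonneg_left (by linarith [hjensen]) hη.le
          _ ≤ Real.exp c2 := hhoeff
      have hterm : ∀ k : Fin N, Real.exp (η * R (n + 1) k) =
          if k ∈ E (n + 1) then Real.exp (η * R n k) * Real.exp (η * (c - X k))
          else Real.exp (η * R n k) := by
        intro k
        have hrec : R (n + 1) k = R n k + (if k ∈ E (n + 1) then c - X k else 0) :=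
          hRrec n k
        rw [hrec]
        split
        · rw [mul_add, Real.exp_add]
        · rw [add_zero]
      have hsplit : W (n + 1) =
          (∑ k ∈ E (n + 1), Real.exp (η * R n k) * Real.exp (η * (c - X k))) +
          ∑ k ∈ Finset.univ \ E (n + 1), Real.exp (η * R n k) := by
        have : W (n + 1) = ∑ k : Fin N,
            (if k ∈ E (n + 1) then Real.exp (η * R n k) * Real.exp (η * (c - X k))
             else Real.exp (η * R n k)) := by
          rw [hW]
          exact Finset.sum_congr rfl fun k _ => hterm k
        rw [this, Finset.sum_ite, Finset.filter_mem_eq_inter, Finset.univ_inter]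
        congr 1
        apply Finset.sum_congr _ fun _ _ => rfl
        ext k
        simp [Finset.mem_sdiff]
      have hWn : (∑ k ∈ Finset.univ \ E (n + 1), Real.exp (η * R n k)) + S = W n := by
        rw [hS, hW]
        exact Finset.sum_sdiff (Finset.subset_univ _)
      have hrestnn : (0:ℝ) ≤ ∑ k ∈ Finset.univ \ E (n + 1), Real.exp (η * R n k) :=
        Finset.sum_nonneg fun k _ => (Real.exp_pos _).le
      have hstep : W (n + 1) ≤ Real.exp c2 * W n := by
        rw [hsplit, ← hWn]
        have h2 : ∑ k ∈ Finset.univ \ E (n + 1), Real.exp (η * R n k) ≤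
            Real.exp c2 * ∑ k ∈ Finset.univ \ E (n + 1), Real.exp (η * R n k) :=
          le_mul_of_one_le_left hrestnn (Real.one_le_exp hc2nn)
        calc (∑ k ∈ E (n + 1), Real.exp (η * R n k) * Real.exp (η * (c - X k))) +
              ∑ k ∈ Finset.univ \ E (n + 1), Real.exp (η * R n k)
            ≤ S * Real.exp c2 +
              Real.exp c2 * ∑ k ∈ Finset.univ \ E (n + 1), Real.exp (η * R n k) :=
              add_le_add hactive h2
          _ = Real.exp c2 *
              ((∑ k ∈ Finset.univ \ E (n + 1), Real.exp (η * R n k)) + S) := by ring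
      have hcast : ((n + 1 : ℕ) : ℝ) = (n : ℝ) + 1 := by push_cast; ring
      rw [hcast]
      calc W (n + 1) ≤ Real.exp c2 * W n := hstep
        _ ≤ Real.exp c2 * (N * Real.exp (c2 * n)) :=
            mul_le_mul_of_nonneg_left ihn (Real.exp_pos _).le
        _ = N * Real.exp (c2 * ((n : ℝ) + 1)) := by
            rw [← mul_assoc, mul_comm (Real.exp c2) (N:ℝ), mul_assoc, ← Real.exp_add]
            ring_nf
  intro j
  have h1 : Real.exp (η * R T j) ≤ W T := by
    rw [hW]
    exact Finset.single_le_sum (f := fun k => Real.exp (η * R T k))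
      (fun k _ => (Real.exp_pos _).le) (Finset.mem_univ j)
  have h2 : Real.exp (η * R T j) ≤ Real.exp (Real.log N + c2 * T) := by
    rw [Real.exp_add, Real.exp_log (by exact_mod_cast hN)]
    exact h1.trans (key T le_rfl)
  have h3 : η * R T j ≤ Real.log N + c2 * T := Real.exp_le_exp.mp h2
  rw [hc2] at h3
  calc R T j = (η * R T j) / η := by field_simp
    _ ≤ (Real.log N + η ^ 2 * L ^ 2 / 2 * T) / η := by
        gcongr
    _ = Real.log N / η + η / 2 * L ^ 2 * T := by field_simp
end

section
/- Regret bound for the gradient fixed-share rule against compound convex combinations: if the ℓ_t are convex and subdifferentiable on the simplex with subgradients bounded in sup-norm by G, then for every m, max over legal compound convex weight sequences q_1^T with at most m switches of Σ_t (ℓ_t(p_t) - ℓ_t(q_t)) ≤ ((m+1)/η) ln N + (1/η) ln(1/(α^m (1-α)^{T-m-1})) + (η/2) G² T. -/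
/-!
The subgradient inequality bounds the regret by that of the linear pseudo-losses `x ↦ g t ⬝ x`.
A compound convex weight sequence is beaten by a path of single experts with no more switches:
for each value `v` taken by `q t`, some expert in the support of `v` has cumulative pseudo-loss
over the rounds where `q t = v` at most the `v`-average. Against such a path `σ` the total weight
`W T` of fixed share is squeezed: Hoeffding's lemma (pseudo-losses lie in an interval of length
`2G`) gives `W (t + 1) ≤ W t * exp (-η p t ⬝ g t + η² G² / 2)`, while the weight of `σ` is
multiplied by at least `α / N` in `m` rounds containing its switches and by `1 - α` in the others.
-/

open Finset Real

open MeasureTheory ProbabilityTheory in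
theorem sum_mul_exp_le_of_mem_Icc {ι : Type*} [Fintype ι] {P x : ι → ℝ}
    (hP : P ∈ stdSimplex ℝ ι) {a b : ℝ} (hx : ∀ i, x i ∈ Set.Icc a b) (s : ℝ) :
    ∑ i, P i * exp (s * x i) ≤ exp (s * ∑ i, P i * x i + (b - a) ^ 2 / 8 * s ^ 2) := by
  let _ : MeasurableSpace ι := ⊤
  let μ : Measure ι := (PMF.ofFintype (fun i ↦ ENNReal.ofReal (P i)) (by
    rw [← ENNReal.ofReal_sum_of_nonneg fun i _ ↦ hP.1 i, hP.2, ENNReal.ofReal_one])).toMeasure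
  have hμ (f : ι → ℝ) : ∫ i, f i ∂μ = ∑ i, P i * f i := by
    simp [μ, PMF.integral_eq_sum, ENNReal.toReal_ofReal (hP.1 _)]
  have hsub := (hasSubgaussianMGF_of_mem_Icc (μ := μ) (X := x)
    Measurable.of_discrete.aemeasurable (ae_of_all _ hx)).mgf_le s
  rw [mgf, hμ, hμ] at hsub
  have hc : (((‖b - a‖₊ / 2) ^ 2 : NNReal) : ℝ) * s ^ 2 / 2 = (b - a) ^ 2 / 8 * s ^ 2 := by
    simp only [NNReal.coe_pow, NNReal.coe_div, coe_nnnorm, Real.norm_eq_abs, NNReal.coe_ofNat,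
      div_pow, sq_abs]
    ring
  set m := ∑ i, P i * x i
  calc ∑ i, P i * exp (s * x i) = exp (s * m) * ∑ i, P i * exp (s * (x i - m)) := by
        rw [mul_sum]
        refine sum_congr rfl fun i _ ↦ ?_
        rw [mul_left_comm, ← exp_add]
        ring_nf
    _ ≤ exp (s * m) * exp ((b - a) ^ 2 / 8 * s ^ 2) := by rw [← hc]; gcongr
    _ = _ := (exp_add _ _).symm

theorem exists_pos_and_le_sum_mul_of_mem_stdSimplex {ι : Type*} [Fintype ι] {v : ι → ℝ}
    (hv : v ∈ stdSimplex ℝ ι) (y : ι → ℝ) : ∃ i, 0 < v i ∧ y i ≤ ∑ j, v j * y j := by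
  by_contra! h
  set m := ∑ j, v j * y j
  obtain ⟨i, hi⟩ : ∃ i, 0 < v i := by
    by_contra! h0
    have := hv.2 ▸ sum_nonpos fun i _ ↦ h0 i
    norm_num at this
  have hle (j : ι) : v j * m ≤ v j * y j := by
    rcases (hv.1 j).eq_or_lt with h0 | hpos
    · simp [← h0]
    · exact mul_le_mul_of_nonneg_left (h j hpos).le hpos.le
  have hlt : ∑ j, v j * m < ∑ j, v j * y j :=
    sum_lt_sum (fun j _ ↦ hle j) ⟨i, mem_univ i, mul_lt_mul_of_pos_left (h i hi) hi⟩
  rw [← sum_mul, hv.2, one_mul] at hlt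
  exact hlt.false

theorem exists_selector_sum_le_sum_mul {ι : Type*} [Fintype ι] [Nonempty ι] (T : ℕ)
    (q x : ℕ → ι → ℝ) (hq : ∀ t < T, q t ∈ stdSimplex ℝ ι) :
    ∃ I : (ι → ℝ) → ι, (∀ t < T, 0 < q t (I (q t))) ∧
      ∑ t ∈ range T, x t (I (q t)) ≤ ∑ t ∈ range T, ∑ j, q t j * x t j := by
  classical
  have hI (v : ι → ℝ) : ∃ i, v ∈ stdSimplex ℝ ι → 0 < v i ∧
      ∑ t ∈ range T with q t = v, x t i ≤ ∑ j, v j * ∑ t ∈ range T with q t = v, x t j := by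
    by_cases hv : v ∈ stdSimplex ℝ ι
    · obtain ⟨i, hi⟩ := exists_pos_and_le_sum_mul_of_mem_stdSimplex hv
        fun j ↦ ∑ t ∈ range T with q t = v, x t j
      exact ⟨i, fun _ ↦ hi⟩
    · exact ⟨Classical.arbitrary ι, fun h ↦ (hv h).elim⟩
  choose I hI using hI
  refine ⟨I, fun t ht ↦ (hI _ (hq t ht)).1, ?_⟩
  have hmaps : ∀ t ∈ range T, q t ∈ (range T).image q := fun t ht ↦ mem_image_of_mem q ht
  rw [← sum_fiberwise_of_maps_to hmaps, ← sum_fiberwise_of_maps_to hmaps]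
  refine sum_le_sum fun v hv ↦ ?_
  obtain ⟨t, ht, rfl⟩ := mem_image.1 hv
  calc ∑ u ∈ range T with q u = q t, x u (I (q u))
      = ∑ u ∈ range T with q u = q t, x u (I (q t)) :=
        sum_congr rfl fun u hu ↦ by rw [(mem_filter.1 hu).2]
    _ ≤ ∑ j, q t j * ∑ u ∈ range T with q u = q t, x u j := (hI _ (hq t (mem_range.1 ht))).2
    _ = ∑ u ∈ range T with q u = q t, ∑ j, q u j * x u j := by
        simp_rw [mul_sum]
        rw [sum_comm]
        exact sum_congr rfl fun u hu ↦ by rw [(mem_filter.1 hu).2]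

theorem prod_range_ite_succ_mem {M : Type*} [CommMonoid M] {S : Finset ℕ} {n : ℕ}
    (hS : S ⊆ Ico 1 (n + 1)) (a b : M) :
    ∏ t ∈ range n, (if t + 1 ∈ S then a else b) = a ^ #S * b ^ (n - #S) := by
  have hshift := prod_Ico_eq_prod_range (fun t ↦ if t ∈ S then a else b) 1 (n + 1)
  simp only [Nat.add_sub_cancel, add_comm 1] at hshift
  rw [← hshift, prod_ite, filter_mem_eq_inter, inter_eq_right.2 hS, filter_notMem_eq_sdiff,
    prod_const, prod_const, card_sdiff_of_subset hS, Nat.card_Ico, Nat.add_sub_cancel]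

section FixedShare

variable {ι : Type*} [DecidableEq ι]

/-- One round of fixed share: `v i` is the weight of expert `i` after the exponential update of the
round, and `A`, `B` are the active sets of this round and of the next. -/
noncomputable def fixedShareStep (A B : Finset ι) (α : ℝ) (v : ι → ℝ) (j : ι) : ℝ :=
  if j ∈ B then
    1 / (#B : ℝ) * ∑ i ∈ A \ B, v i + α / (#B : ℝ) * ∑ i ∈ A ∩ B, v i
      + (1 - α) * (if j ∈ A ∩ B then v j else 0)
  else 0

section Step

variable {A B : Finset ι} {α : ℝ} {v : ι → ℝ}

theorem fixedShareStep_nonneg (hα0 : 0 ≤ α) (hα1 : α ≤ 1) (hv : ∀ i, 0 ≤ v i) (j : ι) :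
    0 ≤ fixedShareStep A B α v j := by
  unfold fixedShareStep
  split
  · have hstay : 0 ≤ if j ∈ A ∩ B then v j else 0 := by split <;> simp [hv]
    exact add_nonneg (add_nonneg (mul_nonneg (by positivity) (sum_nonneg fun i _ ↦ hv i))
      (mul_nonneg (by positivity) (sum_nonneg fun i _ ↦ hv i))) (mul_nonneg (by linarith) hstay)
  · exact le_rfl

theorem sum_fixedShareStep (hB : B.Nonempty) :
    ∑ j ∈ B, fixedShareStep A B α v j = ∑ i ∈ A, v i := by
  have hB : (#B : ℝ) ≠ 0 := by simpa using hB.card_pos.ne'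
  unfold fixedShareStep
  rw [sum_congr rfl fun j hj ↦ if_pos hj, sum_add_distrib, sum_const, ← mul_sum, ← sum_filter,
    filter_mem_eq_inter, inter_comm B, inter_assoc, inter_self, nsmul_eq_mul,
    ← sum_inter_add_sum_sdiff A B]
  field_simp
  ring

theorem div_card_mul_le_fixedShareStep [Fintype ι] (hα0 : 0 ≤ α) (hα1 : α ≤ 1) (hv : ∀ i, 0 ≤ v i)
    {i j : ι} (hi : i ∈ A) (hj : j ∈ B) :
    α / Fintype.card ι * v i ≤ fixedShareStep A B α v j := by
  have hB : (0 : ℝ) < #B := by exact_mod_cast card_pos.2 ⟨j, hj⟩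
  have hαB : α / Fintype.card ι ≤ α / #B :=
    div_le_div_of_nonneg_left hα0 hB (by exact_mod_cast card_le_univ B)
  have hleave := mul_nonneg (one_div_nonneg.2 hB.le) (sum_nonneg fun k (_ : k ∈ A \ B) ↦ hv k)
  have hshare := mul_nonneg (div_nonneg hα0 hB.le) (sum_nonneg fun k (_ : k ∈ A ∩ B) ↦ hv k)
  have hstay : 0 ≤ (1 - α) * if j ∈ A ∩ B then v j else 0 :=
    mul_nonneg (by linarith) (by split <;> simp [hv])
  unfold fixedShareStep
  rw [if_pos hj]
  by_cases hiB : i ∈ B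
  · have hvi : v i ≤ ∑ k ∈ A ∩ B, v k := single_le_sum (fun k _ ↦ hv k) (mem_inter.2 ⟨hi, hiB⟩)
    have := mul_le_mul hαB hvi (hv i) (div_nonneg hα0 hB.le)
    linarith
  · have hvi : v i ≤ ∑ k ∈ A \ B, v k := single_le_sum (fun k _ ↦ hv k) (mem_sdiff.2 ⟨hi, hiB⟩)
    have := mul_le_mul (hαB.trans (div_le_div_of_nonneg_right hα1 hB.le)) hvi (hv i)
      (one_div_nonneg.2 hB.le)
    linarith

theorem one_sub_mul_le_fixedShareStep (hα0 : 0 ≤ α) (hv : ∀ i, 0 ≤ v i)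
    {i : ι} (hiA : i ∈ A) (hiB : i ∈ B) :
    (1 - α) * v i ≤ fixedShareStep A B α v i := by
  have hB : (0 : ℝ) ≤ #B := (#B).cast_nonneg
  have hleave := mul_nonneg (one_div_nonneg.2 hB) (sum_nonneg fun k (_ : k ∈ A \ B) ↦ hv k)
  have hshare := mul_nonneg (div_nonneg hα0 hB) (sum_nonneg fun k (_ : k ∈ A ∩ B) ↦ hv k)
  unfold fixedShareStep
  rw [if_pos hiB, if_pos (mem_inter.2 ⟨hiA, hiB⟩)]
  linarith

end Step

theorem sum_mul_eq_div_of_normalize {s : Finset ι} {w p : ι → ℝ} [Fintype ι]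
    (hp : ∀ i, p i = (if i ∈ s then w i else 0) / ∑ k ∈ s, w k) (f : ι → ℝ) :
    ∑ i, p i * f i = (∑ i ∈ s, w i * f i) / ∑ k ∈ s, w k := by
  simp_rw [hp, div_mul_eq_mul_div, ← sum_div, ite_mul, zero_mul, sum_ite_mem, univ_inter]

theorem mem_stdSimplex_of_normalize {s : Finset ι} {w p : ι → ℝ} [Fintype ι]
    (hw : ∀ i, 0 ≤ w i) (hpos : 0 < ∑ k ∈ s, w k)
    (hp : ∀ i, p i = (if i ∈ s then w i else 0) / ∑ k ∈ s, w k) : p ∈ stdSimplex ℝ ι := by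
  refine ⟨fun i ↦ hp i ▸ div_nonneg (by split <;> simp [hw]) hpos.le, ?_⟩
  simpa [hpos.ne'] using sum_mul_eq_div_of_normalize hp 1

variable {E : ℕ → Finset ι} {η α : ℝ} {x w : ℕ → ι → ℝ}

theorem fixedShare_nonneg (hα0 : 0 ≤ α) (hα1 : α ≤ 1) (hw0 : ∀ i, 0 ≤ w 0 i)
    (hupd : ∀ t j, w (t + 1) j =
      fixedShareStep (E t) (E (t + 1)) α (fun i ↦ w t i * exp (-η * x t i)) j) :
    ∀ t i, 0 ≤ w t i
  | 0 => hw0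
  | t + 1 => fun j ↦ hupd t j ▸ fixedShareStep_nonneg hα0 hα1
      (fun i ↦ mul_nonneg (fixedShare_nonneg hα0 hα1 hw0 hupd t i) (exp_pos _).le) j

theorem sum_fixedShare_succ
    (hupd : ∀ t j, w (t + 1) j =
      fixedShareStep (E t) (E (t + 1)) α (fun i ↦ w t i * exp (-η * x t i)) j)
    {t : ℕ} (hE : (E (t + 1)).Nonempty) :
    ∑ j ∈ E (t + 1), w (t + 1) j = ∑ i ∈ E t, w t i * exp (-η * x t i) := by
  simp_rw [hupd]
  exact sum_fixedShareStep hE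

theorem log_sum_fixedShare_le [Fintype ι] {p : ℕ → ι → ℝ} {G : ℝ} (hw : ∀ t i, 0 ≤ w t i)
    (hupd : ∀ t j, w (t + 1) j =
      fixedShareStep (E t) (E (t + 1)) α (fun i ↦ w t i * exp (-η * x t i)) j)
    (hE : ∀ t, (E t).Nonempty) (hpos : ∀ t, 0 < ∑ k ∈ E t, w t k)
    (hp : ∀ t i, p t i = (if i ∈ E t then w t i else 0) / ∑ k ∈ E t, w t k)
    (hx : ∀ t i, |x t i| ≤ G) (T : ℕ) :
    log (∑ j ∈ E T, w T j) ≤ log (∑ j ∈ E 0, w 0 j)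
      - η * ∑ t ∈ range T, ∑ i, p t i * x t i + η ^ 2 * G ^ 2 / 2 * T := by
  have hstep (t : ℕ) : log (∑ j ∈ E (t + 1), w (t + 1) j) - log (∑ j ∈ E t, w t j)
      ≤ -η * ∑ i, p t i * x t i + η ^ 2 * G ^ 2 / 2 := by
    have hratio : ∑ i, p t i * exp (-η * x t i)
        = (∑ j ∈ E (t + 1), w (t + 1) j) / ∑ j ∈ E t, w t j := by
      rw [sum_mul_eq_div_of_normalize (hp t), sum_fixedShare_succ hupd (hE (t + 1))]
    have hhoeffding := sum_mul_exp_le_of_mem_Icc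
      (mem_stdSimplex_of_normalize (hw t) (hpos t) (hp t)) (fun i ↦ abs_le.1 (hx t i)) (-η)
    rw [hratio, ← log_le_iff_le_exp (div_pos (hpos _) (hpos _)), log_div (hpos _).ne' (hpos _).ne']
      at hhoeffding
    linarith
  have htel := sum_le_sum fun t (_ : t ∈ range T) ↦ hstep t
  rw [sum_range_sub (fun t ↦ log (∑ j ∈ E t, w t j)), sum_add_distrib, ← mul_sum, sum_const,
    card_range, nsmul_eq_mul] at htel
  linarith

theorem mul_prod_le_fixedShare_of_path [Fintype ι] (hα0 : 0 ≤ α) (hα1 : α ≤ 1)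
    (hw : ∀ t i, 0 ≤ w t i)
    (hupd : ∀ t j, w (t + 1) j =
      fixedShareStep (E t) (E (t + 1)) α (fun i ↦ w t i * exp (-η * x t i)) j)
    {S : Finset ℕ} {σ : ℕ → ι} {n : ℕ} (hσ : ∀ t ≤ n, σ t ∈ E t)
    (hσS : ∀ t < n, t + 1 ∉ S → σ t = σ (t + 1)) :
    w 0 (σ 0) * ∏ t ∈ range n,
        ((if t + 1 ∈ S then α / Fintype.card ι else 1 - α) * exp (-η * x t (σ t)))
      ≤ w n (σ n) := by
  induction n with
  | zero => simp
  | succ n ih =>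
    have hv (i : ι) : 0 ≤ w n i * exp (-η * x n i) := mul_nonneg (hw n i) (exp_pos _).le
    have hfactor : 0 ≤ if n + 1 ∈ S then α / Fintype.card ι else 1 - α := by
      split
      · positivity
      · linarith
    rw [prod_range_succ, ← mul_assoc]
    refine (mul_le_mul_of_nonneg_right (ih (fun t ht ↦ hσ t (by omega))
      (fun t ht ↦ hσS t (by omega))) (mul_nonneg hfactor (exp_pos _).le)).trans ?_
    rw [hupd, mul_left_comm]
    split_ifs with hS
    · exact div_card_mul_le_fixedShareStep hα0 hα1 hv (hσ n (by omega)) (hσ (n + 1) le_rfl)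
    · have hstay := hσS n (by omega) hS
      rw [← hstay]
      exact one_sub_mul_le_fixedShareStep hα0 hv (hσ n (by omega)) (hstay ▸ hσ (n + 1) le_rfl)

theorem pow_mul_exp_le_sum_fixedShare [Fintype ι] (hα0 : 0 ≤ α) (hα1 : α ≤ 1)
    (hw0 : ∀ i, w 0 i = if i ∈ E 0 then (1 : ℝ) / #(E 0) else 0) (hw : ∀ t i, 0 ≤ w t i)
    (hupd : ∀ t j, w (t + 1) j =
      fixedShareStep (E t) (E (t + 1)) α (fun i ↦ w t i * exp (-η * x t i)) j)
    {S : Finset ℕ} {σ : ℕ → ι} {n : ℕ} (hS : S ⊆ Ico 1 (n + 1)) (hσ : ∀ t ≤ n, σ t ∈ E t)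
    (hσS : ∀ t ∈ Ico 1 (n + 1), σ (t - 1) ≠ σ t → t ∈ S) (hE : (E (n + 1)).Nonempty) :
    α ^ #S * (1 - α) ^ (n - #S) / (Fintype.card ι : ℝ) ^ (#S + 1)
        * exp (-η * ∑ t ∈ range (n + 1), x t (σ t))
      ≤ ∑ j ∈ E (n + 1), w (n + 1) j := by
  set N : ℝ := (Fintype.card ι : ℝ)
  have hE0 : (0 : ℝ) < #(E 0) := by exact_mod_cast card_pos.2 ⟨σ 0, hσ 0 n.zero_le⟩
  have hw0σ : 1 / N ≤ w 0 (σ 0) := by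
    rw [hw0, if_pos (hσ 0 n.zero_le)]
    exact one_div_le_one_div_of_le hE0 (Nat.cast_le.2 (card_le_univ _))
  have hpath := mul_prod_le_fixedShare_of_path hα0 hα1 hw hupd (S := S) hσ fun t ht hSt ↦ by
    by_contra hne
    exact hSt (hσS (t + 1) (mem_Ico.2 ⟨by omega, by omega⟩) (by simpa using hne))
  rw [prod_mul_distrib, prod_range_ite_succ_mem hS, ← exp_sum] at hpath
  calc α ^ #S * (1 - α) ^ (n - #S) / N ^ (#S + 1) * exp (-η * ∑ t ∈ range (n + 1), x t (σ t))
      = 1 / N * ((α / N) ^ #S * (1 - α) ^ (n - #S) * exp (∑ t ∈ range n, -η * x t (σ t)))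
          * exp (-η * x n (σ n)) := by
        have hN : N ≠ 0 := (hE0.trans_le (Nat.cast_le.2 (card_le_univ _))).ne'
        rw [sum_range_succ, mul_add, exp_add, mul_sum, div_pow]
        field_simp
        ring
    _ ≤ w n (σ n) * exp (-η * x n (σ n)) := by
        gcongr
        exact (mul_le_mul_of_nonneg_right hw0σ (by positivity)).trans hpath
    _ ≤ ∑ i ∈ E n, w n i * exp (-η * x n i) :=
        single_le_sum (f := fun i ↦ w n i * exp (-η * x n i))
          (fun i _ ↦ mul_nonneg (hw n i) (exp_pos _).le) (hσ n le_rfl)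
    _ = ∑ j ∈ E (n + 1), w (n + 1) j := (sum_fixedShare_succ hupd hE).symm

theorem fixedShare_regret_le [Fintype ι] {p : ℕ → ι → ℝ} {G : ℝ} {T m : ℕ} (hT : 1 ≤ T)
    (hm : m ≤ T - 1) (hη : 0 < η) (hα0 : 0 < α) (hα1 : α < 1) (hE : ∀ t, (E t).Nonempty)
    (hw0 : ∀ i, w 0 i = if i ∈ E 0 then (1 : ℝ) / #(E 0) else 0)
    (hupd : ∀ t j, w (t + 1) j =
      fixedShareStep (E t) (E (t + 1)) α (fun i ↦ w t i * exp (-η * x t i)) j)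
    (hpos : ∀ t, 0 < ∑ k ∈ E t, w t k)
    (hp : ∀ t i, p t i = (if i ∈ E t then w t i else 0) / ∑ k ∈ E t, w t k)
    (hx : ∀ t i, |x t i| ≤ G) {σ : ℕ → ι} (hσ : ∀ t < T, σ t ∈ E t)
    (hσsw : #{t ∈ Ico 1 T | σ (t - 1) ≠ σ t} ≤ m) :
    ∑ t ∈ range T, (∑ i, p t i * x t i - x t (σ t))
      ≤ ((m : ℝ) + 1) / η * log (Fintype.card ι)
        + 1 / η * log (1 / (α ^ m * (1 - α) ^ (T - m - 1))) + η / 2 * G ^ 2 * T := by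
  obtain ⟨n, rfl⟩ : ∃ n, T = n + 1 := ⟨T - 1, by omega⟩
  have hw := fixedShare_nonneg hα0.le hα1.le (fun i ↦ by rw [hw0]; split <;> positivity) hupd
  -- Charging exactly `m` rounds, a superset of the switches, makes the bound hold whichever of
  -- `α / card ι` and `1 - α` is larger.
  obtain ⟨S, hDS, hS, rfl⟩ :=
    exists_subsuperset_card_eq (filter_subset _ _) hσsw (by simpa using hm)
  have hlower := pow_mul_exp_le_sum_fixedShare hα0.le hα1.le hw0 hw hupd hS
    (fun t ht ↦ hσ t (by omega)) (fun t ht hne ↦ hDS (mem_filter.2 ⟨ht, hne⟩)) (hE _)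
  have hupper := log_sum_fixedShare_le hw hupd hE hpos hp hx (n + 1)
  have hW0 : ∑ j ∈ E 0, w 0 j = 1 := by
    rw [sum_congr rfl fun i hi ↦ by rw [hw0, if_pos hi], sum_const, nsmul_eq_mul]
    field_simp [(hE 0).card_pos.ne']
  have hN : (0 : ℝ) < Fintype.card ι := by exact_mod_cast Fintype.card_pos_iff.2 ⟨σ 0⟩
  have hc : 0 < α ^ #S * (1 - α) ^ (n - #S) := by
    have : 0 < 1 - α := by linarith
    positivity
  have hlog := log_le_log (by positivity) hlower
  rw [hW0, log_one] at hupper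
  rw [log_mul (by positivity) (exp_pos _).ne', log_exp, log_div hc.ne' (by positivity),
    log_pow] at hlog
  rw [show n + 1 - #S - 1 = n - #S by omega, log_div one_ne_zero hc.ne', log_one, zero_sub,
    sum_sub_distrib]
  have key : ∑ t ∈ range (n + 1), ∑ i, p t i * x t i - ∑ t ∈ range (n + 1), x t (σ t)
      ≤ ((#S + 1) * log (Fintype.card ι) - log (α ^ #S * (1 - α) ^ (n - #S))
        + η ^ 2 * G ^ 2 / 2 * (n + 1)) / η := by
    rw [le_div_iff₀ hη]
    push_cast at hupper hlog
    linarith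
  push_cast
  convert key using 1
  field_simp
  ring

end FixedShare

theorem gradient_fixed_share_regret_bound_general
    (N T m : ℕ) (hT : 1 ≤ T) (hm : m ≤ T - 1)
    (η α G : ℝ) (hη : 0 < η) (hα : 0 < α) (hα1 : α < 1)
    (E : ℕ → Finset (Fin N)) (hE : ∀ t, (E t).Nonempty)
    (ℓ : ℕ → (Fin N → ℝ) → ℝ)
    (p : ℕ → Fin N → ℝ)
    -- `g t` is a subgradient of `ℓ t` at the played point `p t`, bounded by `G`
    (g : ℕ → Fin N → ℝ)
    (hsub : ∀ t, t < T → ∀ x ∈ stdSimplex ℝ (Fin N),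
      ℓ t (p t) + ∑ i : Fin N, g t i * (x i - p t i) ≤ ℓ t x)
    (hGbound : ∀ t i, |g t i| ≤ G)
    -- the fixed-share rule run on the pseudo-losses, i.e. on the values `g t i`
    (w : ℕ → Fin N → ℝ)
    (hw0 : ∀ i, w 0 i = if i ∈ E 0 then (1 : ℝ) / (E 0).card else 0)
    (hupd : ∀ t j, w (t + 1) j =
      if j ∈ E (t + 1) then
        (1 / ((E (t + 1)).card : ℝ)) *
            (∑ i ∈ E t \ E (t + 1), w t i * Real.exp (-η * g t i))
          + (α / ((E (t + 1)).card : ℝ)) *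
              (∑ i ∈ E t ∩ E (t + 1), w t i * Real.exp (-η * g t i))
          + (1 - α) * (if j ∈ E t ∩ E (t + 1) then w t j * Real.exp (-η * g t j) else 0)
      else 0)
    (hpos : ∀ t, 0 < ∑ k ∈ E t, w t k)
    (hp : ∀ t i, p t i = (if i ∈ E t then w t i else 0) / ∑ k ∈ E t, w t k)
    -- a legal compound convex weight sequence with at most `m` switches
    (q : ℕ → Fin N → ℝ)
    (hqsimp : ∀ t, t < T → q t ∈ stdSimplex ℝ (Fin N))
    (hqsupp : ∀ t, t < T → ∀ i, i ∉ E t → q t i = 0)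
    (hqsw : ((Finset.Ico 1 T).filter fun t => q (t - 1) ≠ q t).card ≤ m) :
    ∑ t ∈ Finset.range T, (ℓ t (p t) - ℓ t (q t))
      ≤ ((m : ℝ) + 1) / η * Real.log N
        + (1 / η) * Real.log (1 / (α ^ m * (1 - α) ^ (T - m - 1)))
        + η / 2 * G ^ 2 * T := by
  obtain ⟨i₀, -⟩ := hE 0
  have : Nonempty (Fin N) := ⟨i₀⟩
  obtain ⟨I, hIpos, hIle⟩ := exists_selector_sum_le_sum_mul T q g hqsimp
  have hσ (t : ℕ) (ht : t < T) : I (q t) ∈ E t := by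
    by_contra h
    exact (hIpos t ht).ne' (hqsupp t ht _ h)
  have hσsw : #{t ∈ Ico 1 T | I (q (t - 1)) ≠ I (q t)} ≤ m :=
    (card_le_card (monotone_filter_right _ fun t _ h ↦ mt (congrArg I) h)).trans hqsw
  have hregret := fixedShare_regret_le hT hm hη hα hα1 hE hw0 hupd hpos hp hGbound hσ hσsw
  rw [Fintype.card_fin] at hregret
  have hlinearize (t : ℕ) (ht : t < T) :
      ℓ t (p t) - ℓ t (q t) ≤ ∑ i, p t i * g t i - ∑ i, q t i * g t i := by
    have hlin : ∑ i, g t i * (q t i - p t i) = ∑ i, q t i * g t i - ∑ i, p t i * g t i := by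
      rw [← sum_sub_distrib]
      exact sum_congr rfl fun i _ ↦ by ring
    linarith [hsub t ht (q t) (hqsimp t ht)]
  calc ∑ t ∈ range T, (ℓ t (p t) - ℓ t (q t))
      ≤ ∑ t ∈ range T, (∑ i, p t i * g t i - ∑ i, q t i * g t i) :=
        sum_le_sum fun t ht ↦ hlinearize t (mem_range.1 ht)
    _ ≤ ∑ t ∈ range T, (∑ i, p t i * g t i - g t (I (q t))) := by
        rw [sum_sub_distrib, sum_sub_distrib]
        linarith
    _ ≤ _ := hregret

/-- Regret bound for the gradient fixed-share rule `F_{η,α}^grad` against compound convex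
combinations: if the losses are convex and subdifferentiable on the simplex with subgradients
bounded in sup-norm by `G`, then for every legal sequence of convex weight vectors with at most
`m` switches,
`Σ_t (ℓ_t(p_t) - ℓ_t(q_t)) ≤ ((m+1)/η) ln N + (1/η) ln(1/(α^m (1-α)^{T-m-1})) + (η/2) G² T`. -/
theorem gradient_fixed_share_regret_bound
    (N T m : ℕ) (hN : 0 < N) (hT : 1 ≤ T) (hm : m ≤ T - 1)
    (η α G : ℝ) (hη : 0 < η) (hα : 0 < α) (hα1 : α < 1) (hG : 0 ≤ G)
    (E : ℕ → Finset (Fin N)) (hE : ∀ t, (E t).Nonempty)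
    (ℓ : ℕ → (Fin N → ℝ) → ℝ)
    (hconv : ∀ t, ConvexOn ℝ (stdSimplex ℝ (Fin N)) (ℓ t))
    (p : ℕ → Fin N → ℝ)
    -- `g t` is a subgradient of `ℓ t` at the played point `p t`, bounded by `G`
    (g : ℕ → Fin N → ℝ)
    (hsub : ∀ t, t < T → ∀ x ∈ stdSimplex ℝ (Fin N),
      ℓ t (p t) + ∑ i : Fin N, g t i * (x i - p t i) ≤ ℓ t x)
    (hGbound : ∀ t i, |g t i| ≤ G)
    -- the fixed-share rule run on the pseudo-losses, i.e. on the values `g t i`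
    (w : ℕ → Fin N → ℝ)
    (hw0 : ∀ i, w 0 i = if i ∈ E 0 then (1 : ℝ) / (E 0).card else 0)
    (hupd : ∀ t j, w (t + 1) j =
      if j ∈ E (t + 1) then
        (1 / ((E (t + 1)).card : ℝ)) *
            (∑ i ∈ E t \ E (t + 1), w t i * Real.exp (-η * g t i))
          + (α / ((E (t + 1)).card : ℝ)) *
              (∑ i ∈ E t ∩ E (t + 1), w t i * Real.exp (-η * g t i))
          + (1 - α) * (if j ∈ E t ∩ E (t + 1) then w t j * Real.exp (-η * g t j) else 0)
      else 0)
    (hpos : ∀ t, 0 < ∑ k ∈ E t, w t k)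
    (hp : ∀ t i, p t i = (if i ∈ E t then w t i else 0) / ∑ k ∈ E t, w t k)
    -- a legal compound convex weight sequence with at most `m` switches
    (q : ℕ → Fin N → ℝ)
    (hqsimp : ∀ t, t < T → q t ∈ stdSimplex ℝ (Fin N))
    (hqsupp : ∀ t, t < T → ∀ i, i ∉ E t → q t i = 0)
    (hqsw : ((Finset.Ico 1 T).filter fun t => q (t - 1) ≠ q t).card ≤ m) :
    ∑ t ∈ Finset.range T, (ℓ t (p t) - ℓ t (q t))
      ≤ ((m : ℝ) + 1) / η * Real.log N
        + (1 / η) * Real.log (1 / (α ^ m * (1 - α) ^ (T - m - 1)))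
        + η / 2 * G ^ 2 * T :=
  gradient_fixed_share_regret_bound_general N T m hT hm η α G hη hα hα1 E hE ℓ p g hsub hGbound w
    hw0 hupd hpos hp q hqsimp hqsupp hqsw
end
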